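/- arXiv:1407.1167 — 3 statements merged into one kernel-verified Lean document; each statement's English description precedes it below -/
import Mathlib

section
/- Let T = (V, E(T)) be the red tree of a StackMST(0,0) game and let T_1 = (V_1, E_1), …, T_ℓ = (V_ℓ, E_ℓ) be a partition of T into ℓ subtrees, i.e., each T_i is a subtree of T, V = ∪_i V_i, E(T) = ∪_i E_i, and the edge sets E_i are pairwise disjoint. Then the optimal revenue of the game on T is at least the sum of the optimal revenues of the games on the subtrees: r*(T, c) ≥ Σ_{i=1}^{ℓ} r*(T_i, c restricted to E_i). -/
namespace StackMST

variable {V : Type*}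

/-- Sum of an edge-weight function over a set of edges. -/
noncomputable def esum (w : Sym2 V → ℝ) (s : Set (Sym2 V)) : ℝ := ∑ᶠ e ∈ s, w e

/-- `M` is a spanning tree of `G`. -/
def IsSpanningTreeOf (G M : SimpleGraph V) : Prop := M ≤ G ∧ M.IsTree

/-- Total weight of `M`, where red edges (the edges of `T`) are weighted by `c`
and all other (blue) edges are weighted by `p`. -/
noncomputable def weight (T : SimpleGraph V) (c p : Sym2 V → ℝ) (M : SimpleGraph V) : ℝ :=
  esum c (M.edgeSet ∩ T.edgeSet) + esum p (M.edgeSet \ T.edgeSet)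

/-- Total price of the blue edges of `M`. -/
noncomputable def blueRevenue (T : SimpleGraph V) (p : Sym2 V → ℝ) (M : SimpleGraph V) : ℝ :=
  esum p (M.edgeSet \ T.edgeSet)

/-- The leader's revenue once `F` and `p` are fixed: the follower selects a
minimum-weight spanning tree of `T ⊔ F` and, among those, one maximizing the
total price of the blue edges it contains. -/
noncomputable def followerRevenue (T : SimpleGraph V) (c : Sym2 V → ℝ)
    (F : SimpleGraph V) (p : Sym2 V → ℝ) : ℝ :=
  sSup {r | ∃ M : SimpleGraph V, IsSpanningTreeOf (T ⊔ F) M ∧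
    (∀ M' : SimpleGraph V, IsSpanningTreeOf (T ⊔ F) M' →
        weight T c p M ≤ weight T c p M') ∧
    r = blueRevenue T p M}

/-- `F` is a set of blue edges: none of its edges is a red edge. -/
def IsBlueSet (T F : SimpleGraph V) : Prop := F ≤ Tᶜ

/-- `r(F)`: the best revenue the leader can obtain from the activated set `F`. -/
noncomputable def revenueOf (T : SimpleGraph V) (c : Sym2 V → ℝ) (F : SimpleGraph V) : ℝ :=
  sSup {r | ∃ p : Sym2 V → ℝ, (∀ e ∈ F.edgeSet, 0 ≤ p e) ∧ r = followerRevenue T c F p}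

/-- Optimal revenue `r*(T, c)` of the StackMST(0,0) game on the red tree `T`. -/
noncomputable def optRevenue (T : SimpleGraph V) (c : Sym2 V → ℝ) : ℝ :=
  sSup {r | ∃ (F : SimpleGraph V) (p : Sym2 V → ℝ), IsBlueSet T F ∧
    (∀ e ∈ F.edgeSet, 0 ≤ p e) ∧ r = followerRevenue T c F p}

/-- Total cost `c(T)` of the red edges. -/
noncomputable def redCost (T : SimpleGraph V) (c : Sym2 V → ℝ) : ℝ := esum c T.edgeSet

/-- Optimal revenue of the budgeted game StackMST(γ, Δ). -/
noncomputable def gammaOptRevenue (T : SimpleGraph V) (c γ : Sym2 V → ℝ) (Δ : ℝ) : ℝ :=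
  sSup {r | ∃ F : SimpleGraph V, IsBlueSet T F ∧ esum γ F.edgeSet ≤ Δ ∧
    r = revenueOf T c F}

end StackMST

open StackMST

/-!
Play near-optimal strategies `(Fᵢ, pᵢ)` on all subtrees simultaneously. The subtrees pairwise share
at most one vertex and every edge of `T ⊔ ⋃ Fᵢ` lies inside one of them, so weights and revenues
split as sums over the subtrees. Counting edges (`∑ (|Vᵢ| - 1) = |V| - 1`) shows that such a graph
is a spanning tree exactly when each of its restrictions to the subtrees is one. Hence the union of
the followers' optimal responses on the subtrees is an optimal response on `T`, with revenue the
sum of the subtree revenues.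
-/

open SimpleGraph

lemma Real.sum_csSup_le {ι : Type*} [Fintype ι] {S : ι → Set ℝ} (hne : ∀ i, (S i).Nonempty)
    {b : ℝ} (h : ∀ x : ι → ℝ, (∀ i, x i ∈ S i) → ∑ i, x i ≤ b) :
    ∑ i, sSup (S i) ≤ b := by
  refine le_of_forall_pos_le_add fun ε hε => ?_
  set δ := ε / (Fintype.card ι + 1)
  have hδ : 0 < δ := by positivity
  choose x hxS hx using fun i => exists_lt_of_lt_csSup (hne i) (sub_lt_self (sSup (S i)) hδ)
  have hcard : Fintype.card ι * δ ≤ ε := by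
    rw [mul_div_assoc', div_le_iff₀ (by positivity)]
    nlinarith
  calc ∑ i, sSup (S i) ≤ ∑ i, (x i + δ) := Finset.sum_le_sum fun i _ => by linarith [hx i]
    _ = ∑ i, x i + Fintype.card ι * δ := by simp [Finset.sum_add_distrib]
    _ ≤ b + ε := add_le_add (h x hxS) hcard

namespace SimpleGraph

variable {V : Type*}

section Acyclic

variable [Nonempty V] {G : SimpleGraph V}

lemma IsAcyclic.exists_isTree_ge (hG : G.IsAcyclic) : ∃ F, G ≤ F ∧ F.IsTree := by
  obtain ⟨F, hGF, -, hF⟩ := connected_top.exists_isTree_le_of_le_of_isAcyclic le_top hG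
  exact ⟨F, hGF, hF⟩

variable [Finite V]

lemma IsAcyclic.card_edgeSet_add_one_le (hG : G.IsAcyclic) :
    Nat.card G.edgeSet + 1 ≤ Nat.card V := by
  obtain ⟨F, hGF, hF⟩ := hG.exists_isTree_ge
  rw [← (isTree_iff_connected_and_card.mp hF).2, Nat.card_coe_set_eq, Nat.card_coe_set_eq]
  exact Nat.add_le_add_right (Set.ncard_le_ncard (edgeSet_mono hGF)) 1

lemma IsAcyclic.isTree_of_card_le (hG : G.IsAcyclic) (hcard : Nat.card V ≤ Nat.card G.edgeSet + 1) :
    G.IsTree := by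
  obtain ⟨F, hGF, hF⟩ := hG.exists_isTree_ge
  have hFcard := (isTree_iff_connected_and_card.mp hF).2
  rw [Nat.card_coe_set_eq] at hFcard hcard
  have : G.edgeSet = F.edgeSet :=
    Set.eq_of_subset_of_ncard_le (edgeSet_mono hGF) (by omega)
  rwa [edgeSet_inj.mp this]

end Acyclic

namespace Subgraph

variable {T : SimpleGraph V} {S S' : T.Subgraph} {u v : V}

lemma Connected.exists_isPath (hS : S.Connected) (hu : u ∈ S.verts) (hv : v ∈ S.verts) :
    ∃ p : T.Walk u v, p.IsPath ∧ ∀ e ∈ p.edges, e ∈ S.edgeSet := by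
  classical
  obtain ⟨w⟩ := hS.coe.preconnected ⟨u, hu⟩ ⟨v, hv⟩
  refine ⟨(w.map S.hom).bypass, Walk.bypass_isPath _, fun e he => ?_⟩
  have he' := (w.map S.hom).edges_bypass_subset_edges he
  rw [Walk.edges_map, List.mem_map] at he'
  obtain ⟨e', he', rfl⟩ := he'
  induction e' using Sym2.ind with
  | _ x y => exact S.mem_edgeSet.mpr (w.adj_of_mem_edges he')

/-- Paths in an acyclic graph are unique, so `p` is the path found inside `S`. -/
lemma Connected.mem_edgeSet_of_isPath (hT : T.IsAcyclic) (hS : S.Connected) (hu : u ∈ S.verts)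
    (hv : v ∈ S.verts) {p : T.Walk u v} (hp : p.IsPath) {e : Sym2 V} (he : e ∈ p.edges) :
    e ∈ S.edgeSet := by
  obtain ⟨q, hq, hqS⟩ := hS.exists_isPath hu hv
  obtain rfl : p = q := congrArg Subtype.val ((hT.subsingleton_path u v).elim ⟨p, hp⟩ ⟨q, hq⟩)
  exact hqS e he

lemma Connected.coe_eq_induce (hT : T.IsAcyclic) (hS : S.Connected) :
    S.coe = T.induce S.verts := by
  ext x y
  refine ⟨fun h => S.adj_sub h, fun h => ?_⟩
  replace h : T.Adj x y := h
  exact S.mem_edgeSet.mp (hS.mem_edgeSet_of_isPath hT x.2 y.2 (Walk.IsPath.of_adj h) (by simp))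

lemma Connected.verts_inter_subsingleton (hT : T.IsAcyclic) (hS : S.Connected)
    (hS' : S'.Connected) (h : Disjoint S.edgeSet S'.edgeSet) :
    (S.verts ∩ S'.verts).Subsingleton := by
  rintro u ⟨hu, hu'⟩ v ⟨hv, hv'⟩
  by_contra huv
  obtain ⟨p, hp, hpS⟩ := hS.exists_isPath hu hv
  have he := p.mk_start_snd_mem_edges (Walk.not_nil_of_ne huv)
  exact Set.disjoint_left.mp h (hpS _ he) (hS'.mem_edgeSet_of_isPath hT hu' hv' hp he)

end Subgraph

end SimpleGraph

namespace StackMST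

variable {V ι : Type*}

section Game

variable {G F M : SimpleGraph V} {c p p' : Sym2 V → ℝ}

lemma esum_nonneg {w : Sym2 V → ℝ} {s : Set (Sym2 V)} (h : ∀ e ∈ s, 0 ≤ w e) : 0 ≤ esum w s :=
  finsum_nonneg fun e => finsum_nonneg fun he => h e he

lemma weight_self : weight G c p G = redCost G c := by
  simp [weight, redCost, esum]

lemma blueRevenue_le_weight (hc : ∀ e ∈ G.edgeSet, 0 ≤ c e) :
    blueRevenue G p M ≤ weight G c p M :=
  le_add_of_nonneg_left (esum_nonneg fun e he => hc e he.2)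

lemma blueRevenue_le_redCost (hG : G.IsTree) (hc : ∀ e ∈ G.edgeSet, 0 ≤ c e)
    (hmin : ∀ M', IsSpanningTreeOf (G ⊔ F) M' → weight G c p M ≤ weight G c p M') :
    blueRevenue G p M ≤ redCost G c :=
  calc blueRevenue G p M ≤ weight G c p M := blueRevenue_le_weight hc
    _ ≤ weight G c p G := hmin G ⟨le_sup_left, hG⟩
    _ = redCost G c := weight_self

lemma blueRevenue_le_followerRevenue (hG : G.IsTree) (hc : ∀ e ∈ G.edgeSet, 0 ≤ c e)
    (hM : IsSpanningTreeOf (G ⊔ F) M)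
    (hmin : ∀ M', IsSpanningTreeOf (G ⊔ F) M' → weight G c p M ≤ weight G c p M') :
    blueRevenue G p M ≤ followerRevenue G c F p := by
  refine le_csSup ⟨redCost G c, ?_⟩ ⟨M, hM, hmin, rfl⟩
  rintro r ⟨M', -, hmin', rfl⟩
  exact blueRevenue_le_redCost hG hc hmin'

lemma followerRevenue_le_redCost (hG : G.IsTree) (hc : ∀ e ∈ G.edgeSet, 0 ≤ c e) :
    followerRevenue G c F p ≤ redCost G c := by
  refine Real.sSup_le ?_ (esum_nonneg hc)
  rintro r ⟨M, -, hmin, rfl⟩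
  exact blueRevenue_le_redCost hG hc hmin

lemma followerRevenue_le_optRevenue (hG : G.IsTree) (hc : ∀ e ∈ G.edgeSet, 0 ≤ c e)
    (hF : IsBlueSet G F) (hp : ∀ e ∈ F.edgeSet, 0 ≤ p e) :
    followerRevenue G c F p ≤ optRevenue G c := by
  refine le_csSup ⟨redCost G c, ?_⟩ ⟨F, p, hF, hp, rfl⟩
  rintro r ⟨F', p', -, -, rfl⟩
  exact followerRevenue_le_redCost hG hc

lemma exists_optimal_response [Finite V] (hG : G.IsTree) (c : Sym2 V → ℝ) (F : SimpleGraph V)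
    (p : Sym2 V → ℝ) :
    ∃ M, IsSpanningTreeOf (G ⊔ F) M ∧
      (∀ M', IsSpanningTreeOf (G ⊔ F) M' → weight G c p M ≤ weight G c p M') ∧
      blueRevenue G p M = followerRevenue G c F p := by
  let S := {r | ∃ M, IsSpanningTreeOf (G ⊔ F) M ∧
    (∀ M', IsSpanningTreeOf (G ⊔ F) M' → weight G c p M ≤ weight G c p M') ∧
    r = blueRevenue G p M}
  have hfin : {M | IsSpanningTreeOf (G ⊔ F) M}.Finite := Set.toFinite _
  obtain ⟨M₀, hM₀, hmin₀⟩ := Set.exists_min_image _ (weight G c p) hfin ⟨G, le_sup_left, hG⟩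
  have hne : S.Nonempty := ⟨_, M₀, hM₀, hmin₀, rfl⟩
  have hS : S.Finite := by
    refine (hfin.image (blueRevenue G p)).subset ?_
    rintro r ⟨M, hM, -, rfl⟩
    exact ⟨M, hM, rfl⟩
  obtain ⟨M, hM, hmin, hr⟩ := hne.csSup_mem hS
  exact ⟨M, hM, hmin, hr.symm⟩

lemma blueRevenue_congr (hM : M ≤ G ⊔ F) (h : ∀ e ∈ F.edgeSet, p e = p' e) :
    blueRevenue G p M = blueRevenue G p' M := by
  refine finsum_mem_congr rfl fun e he => h e ?_
  have := edgeSet_mono hM he.1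
  rw [edgeSet_sup] at this
  exact this.resolve_left he.2

lemma weight_congr (hM : M ≤ G ⊔ F) (h : ∀ e ∈ F.edgeSet, p e = p' e) :
    weight G c p M = weight G c p' M :=
  congrArg (_ + ·) (blueRevenue_congr hM h)

lemma followerRevenue_congr (h : ∀ e ∈ F.edgeSet, p e = p' e) :
    followerRevenue G c F p = followerRevenue G c F p' := by
  unfold followerRevenue
  congr 1
  ext r
  refine exists_congr fun M => and_congr_right fun hM => ?_
  rw [blueRevenue_congr hM.1 h]
  refine and_congr_left' (forall_congr' fun M' => imp_congr_right fun hM' => ?_)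
  rw [weight_congr hM.1 h, weight_congr hM'.1 h]

end Game

section Partition

variable {A : ι → Set V} {T G G' : SimpleGraph V}

def AdjWithinBlocks (A : ι → Set V) (G : SimpleGraph V) : Prop :=
  ∀ ⦃u v⦄, G.Adj u v → ∃ i, u ∈ A i ∧ v ∈ A i

/-- The partition of `T` into the subtrees `T.induce (A i)`, recorded by their vertex sets. -/
structure IsSubtreePartition (T : SimpleGraph V) (A : ι → Set V) : Prop where
  connected_induce : ∀ i, (T.induce (A i)).Connected
  inter_subsingleton : Pairwise fun i j => (A i ∩ A j).Subsingleton
  adjWithinBlocks : AdjWithinBlocks A T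

lemma AdjWithinBlocks.mono (h : AdjWithinBlocks A G') (hle : G ≤ G') : AdjWithinBlocks A G :=
  fun _ _ huv => h (hle huv)

lemma AdjWithinBlocks.sup (h : AdjWithinBlocks A G) (h' : AdjWithinBlocks A G') :
    AdjWithinBlocks A (G ⊔ G') :=
  fun _ _ huv => huv.elim (h ·) (h' ·)

lemma iSup_spanningCoe_adj {B : ∀ i, SimpleGraph (A i)} {u v : V} :
    (⨆ i, (B i).spanningCoe).Adj u v ↔
      ∃ i, ∃ (hu : u ∈ A i) (hv : v ∈ A i), (B i).Adj ⟨u, hu⟩ ⟨v, hv⟩ := by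
  simp

lemma adjWithinBlocks_iSup_spanningCoe (B : ∀ i, SimpleGraph (A i)) :
    AdjWithinBlocks A (⨆ i, (B i).spanningCoe) := by
  intro u v huv
  obtain ⟨i, hu, hv, -⟩ := iSup_spanningCoe_adj.mp huv
  exact ⟨i, hu, hv⟩

lemma iSup_spanningCoe_le_compl {B : ∀ i, SimpleGraph (A i)} (hB : ∀ i, B i ≤ (T.induce (A i))ᶜ) :
    ⨆ i, (B i).spanningCoe ≤ Tᶜ := by
  intro u v huv
  obtain ⟨i, hu, hv, huv⟩ := iSup_spanningCoe_adj.mp huv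
  have := hB i huv
  rw [compl_adj, induce_adj] at this
  exact (compl_adj T u v).mpr ⟨fun h => this.1 (Subtype.ext h), this.2⟩

lemma iSup_spanningCoe_le_sup {B F : ∀ i, SimpleGraph (A i)}
    (hB : ∀ i, B i ≤ T.induce (A i) ⊔ F i) :
    ⨆ i, (B i).spanningCoe ≤ T ⊔ ⨆ i, (F i).spanningCoe := by
  intro u v huv
  obtain ⟨i, hu, hv, huv⟩ := iSup_spanningCoe_adj.mp huv
  exact (hB i huv).imp id fun h => iSup_spanningCoe_adj.mpr ⟨i, hu, hv, h⟩

lemma exists_map_val_eq_of_mem_edgeSet_iSup {B : ∀ i, SimpleGraph (A i)} {e : Sym2 V}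
    (he : e ∈ (⨆ i, (B i).spanningCoe).edgeSet) :
    ∃ i, ∃ e' ∈ (B i).edgeSet, Sym2.map Subtype.val e' = e := by
  induction e using Sym2.ind with
  | _ u v =>
    obtain ⟨i, hu, hv, huv⟩ := iSup_spanningCoe_adj.mp he
    exact ⟨i, s(⟨u, hu⟩, ⟨v, hv⟩), huv, rfl⟩

/-- A non-loop edge lies inside at most one block, so this picks out `q i` on edges inside
`A i` (see `blockPrice_map`). -/
noncomputable def blockPrice [Fintype ι] (A : ι → Set V) (q : ∀ i, Sym2 (A i) → ℝ) :
    Sym2 V → ℝ :=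
  fun e => ∑ i, Function.extend (Sym2.map Subtype.val) (q i) 0 e

section DisjointBlocks

variable (hA : Pairwise fun i j => (A i ∩ A j).Subsingleton)
include hA

lemma eq_of_mem_blocks {i j : ι} {u v : V} (huv : u ≠ v) (hi : u ∈ A i ∧ v ∈ A i)
    (hj : u ∈ A j ∧ v ∈ A j) : i = j :=
  by_contra fun hij => huv (hA hij ⟨hi.1, hj.1⟩ ⟨hi.2, hj.2⟩)

lemma eq_of_map_val_eq {i j : ι} {e : Sym2 (A i)} {e' : Sym2 (A j)} (he : ¬e.IsDiag)
    (h : Sym2.map Subtype.val e = Sym2.map Subtype.val e') : i = j := by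
  induction e using Sym2.ind with
  | _ x y =>
    have hxy : (x : V) ≠ y := fun h' => he (Sym2.mk_isDiag_iff.mpr (Subtype.ext h'))
    have hmem : ∀ {w}, w ∈ Sym2.map Subtype.val e' → w ∈ A j := by
      intro w hw
      obtain ⟨a, -, rfl⟩ := Sym2.mem_map.mp hw
      exact a.2
    rw [Sym2.map_mk] at h
    exact eq_of_mem_blocks hA hxy ⟨x.2, y.2⟩
      ⟨hmem (h ▸ Sym2.mem_mk_left _ _), hmem (h ▸ Sym2.mem_mk_right _ _)⟩

lemma induce_iSup_spanningCoe (B : ∀ i, SimpleGraph (A i)) (i : ι) :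
    (⨆ j, (B j).spanningCoe).induce (A i) = B i := by
  ext x y
  rw [induce_adj, iSup_spanningCoe_adj]
  refine ⟨fun ⟨j, hx, hy, hxy⟩ => ?_, fun hxy => ⟨i, x.2, y.2, hxy⟩⟩
  obtain rfl : j = i :=
    eq_of_mem_blocks hA (fun h => hxy.ne (Subtype.ext h)) ⟨hx, hy⟩ ⟨x.2, y.2⟩
  exact hxy

lemma pairwise_disjoint_image_edgeSet_induce (G : SimpleGraph V) :
    Pairwise (Function.onFun Disjoint fun i =>
      Sym2.map Subtype.val '' (G.induce (A i)).edgeSet) := by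
  intro i j hij
  rw [Function.onFun, Set.disjoint_left]
  rintro _ ⟨e, he, rfl⟩ ⟨e', -, h⟩
  exact hij (eq_of_map_val_eq hA ((G.induce (A i)).not_isDiag_of_mem_edgeSet he) h.symm)

lemma induce_le_of_le_sup_iSup {F : ∀ i, SimpleGraph (A i)} {N : SimpleGraph V}
    (hN : N ≤ T ⊔ ⨆ i, (F i).spanningCoe) (i : ι) : N.induce (A i) ≤ T.induce (A i) ⊔ F i := by
  rw [← induce_iSup_spanningCoe hA F i]
  exact fun x y h => hN h

lemma blockPrice_map [Fintype ι] (q : ∀ i, Sym2 (A i) → ℝ) {i : ι} {e : Sym2 (A i)}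
    (he : ¬e.IsDiag) : blockPrice A q (Sym2.map Subtype.val e) = q i e := by
  rw [blockPrice, Finset.sum_eq_single i, (Sym2.map.injective Subtype.val_injective).extend_apply]
  · intro j _ hji
    rw [Function.extend_apply']
    · rfl
    · rintro ⟨e', he'⟩
      exact hji (eq_of_map_val_eq hA he he'.symm).symm
  · simp

end DisjointBlocks

lemma edgeSet_eq_iUnion_induce (hG : AdjWithinBlocks A G) :
    G.edgeSet = ⋃ i, Sym2.map Subtype.val '' (G.induce (A i)).edgeSet := by
  refine subset_antisymm (fun e he => ?_) (Set.iUnion_subset fun i => ?_)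
  · induction e using Sym2.ind with
    | _ u v =>
      obtain ⟨i, hu, hv⟩ := hG he
      exact Set.mem_iUnion.mpr ⟨i, s(⟨u, hu⟩, ⟨v, hv⟩), he, rfl⟩
  · rintro _ ⟨e, he, rfl⟩
    induction e using Sym2.ind with
    | _ x y => exact he

section Decomposition

variable [Fintype ι] [Finite V] (hA : Pairwise fun i j => (A i ∩ A j).Subsingleton)
  (hG : AdjWithinBlocks A G)
include hA hG

lemma finsum_mem_edgeSet_eq_sum_induce {M : Type*} [AddCommMonoid M] (w : Sym2 V → M) :
    ∑ᶠ e ∈ G.edgeSet, w e = ∑ i, ∑ᶠ e ∈ (G.induce (A i)).edgeSet, w (Sym2.map Subtype.val e) := by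
  rw [edgeSet_eq_iUnion_induce hG, finsum_mem_iUnion (pairwise_disjoint_image_edgeSet_induce hA G)
    fun i => Set.toFinite _, finsum_eq_sum_of_fintype]
  exact Finset.sum_congr rfl fun i _ =>
    finsum_mem_image (Sym2.map.injective Subtype.val_injective).injOn

lemma card_edgeSet_eq_sum_induce :
    Nat.card G.edgeSet = ∑ i, Nat.card (G.induce (A i)).edgeSet := by
  have h := finsum_mem_edgeSet_eq_sum_induce hA hG (M := ℕ) (fun _ => 1)
  simp_rw [finsum_one] at h
  simpa only [Nat.card_coe_set_eq] using h

lemma weight_eq_sum_induce (T : SimpleGraph V) (c p : Sym2 V → ℝ) :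
    weight T c p G = ∑ i, weight (T.induce (A i)) (fun e => c (Sym2.map Subtype.val e))
      (fun e => p (Sym2.map Subtype.val e)) (G.induce (A i)) := by
  have hinf := finsum_mem_edgeSet_eq_sum_induce hA (hG.mono (inf_le_left (b := T))) c
  have hsdiff := finsum_mem_edgeSet_eq_sum_induce hA (hG.mono (sdiff_le (b := T))) p
  simp only [weight, esum, ← edgeSet_inf, ← edgeSet_sdiff, hinf, hsdiff, Finset.sum_add_distrib]
  rfl

lemma blueRevenue_eq_sum_induce (T : SimpleGraph V) (p : Sym2 V → ℝ) :
    blueRevenue T p G = ∑ i, blueRevenue (T.induce (A i))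
      (fun e => p (Sym2.map Subtype.val e)) (G.induce (A i)) := by
  have hsdiff := finsum_mem_edgeSet_eq_sum_induce hA (hG.mono (sdiff_le (b := T))) p
  simp only [blueRevenue, esum, ← edgeSet_sdiff, hsdiff]
  rfl

end Decomposition

lemma connected_of_connected_induce (hT : T.Connected) (hTA : AdjWithinBlocks A T)
    (hG : ∀ i, (G.induce (A i)).Connected) : G.Connected := by
  have := hT.nonempty
  refine ⟨fun u v => ?_⟩
  obtain ⟨P⟩ := hT.preconnected u v
  induction P with
  | nil => rfl
  | @cons a b w hab P ih =>
    obtain ⟨i, ha, hb⟩ := hTA hab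
    exact (((hG i).preconnected ⟨a, ha⟩ ⟨b, hb⟩).map (Embedding.induce (A i)).toHom).trans ih

namespace IsSubtreePartition

lemma isTree_induce (hP : IsSubtreePartition T A) (hT : T.IsAcyclic) (i : ι) :
    (T.induce (A i)).IsTree :=
  ⟨hP.connected_induce i, hT.induce _⟩

variable [Fintype ι] [Finite V] (hP : IsSubtreePartition T A)
include hP

/-- Each block is a tree with `|A i| - 1` edges, and these edges partition the `|V| - 1` edges
of `T`. -/
lemma card_add_card_eq_sum_card (hT : T.IsTree) :
    Nat.card V + Fintype.card ι = ∑ i, Nat.card (A i) + 1 := by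
  have hblock i := (isTree_iff_connected_and_card.mp (hP.isTree_induce hT.isAcyclic i)).2
  rw [← (isTree_iff_connected_and_card.mp hT).2,
    card_edgeSet_eq_sum_induce hP.inter_subsingleton hP.adjWithinBlocks, ← Finset.sum_congr rfl
    fun i _ => hblock i, Finset.sum_add_distrib, Finset.sum_const, Finset.card_univ, smul_eq_mul,
    mul_one]
  ring

lemma isTree_iff (hT : T.IsTree) (hG : AdjWithinBlocks A G) :
    G.IsTree ↔ ∀ i, (G.induce (A i)).IsTree := by
  have hcount := hP.card_add_card_eq_sum_card hT
  have hE := card_edgeSet_eq_sum_induce hP.inter_subsingleton hG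
  have hsum : ∑ i, (Nat.card (G.induce (A i)).edgeSet + 1) =
      Nat.card G.edgeSet + Fintype.card ι := by
    rw [hE, Finset.sum_add_distrib, Finset.sum_const, Finset.card_univ, smul_eq_mul, mul_one]
  have hne i : Nonempty (A i) := (hP.connected_induce i).nonempty
  constructor
  · intro hGtree
    have hGcard := (isTree_iff_connected_and_card.mp hGtree).2
    have hacyc i := hGtree.isAcyclic.induce (A i)
    have heq := (Finset.sum_eq_sum_iff_of_le (s := Finset.univ)
      fun i _ => (hacyc i).card_edgeSet_add_one_le).mp (by omega)
    exact fun i => (hacyc i).isTree_of_card_le (heq i (Finset.mem_univ i)).ge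
  · intro hblock
    have hblock_card : ∑ i, (Nat.card (G.induce (A i)).edgeSet + 1) = ∑ i, Nat.card (A i) :=
      Finset.sum_congr rfl fun i _ => (isTree_iff_connected_and_card.mp (hblock i)).2
    refine isTree_iff_connected_and_card.mpr ⟨?_, by omega⟩
    exact connected_of_connected_induce hT.connected hP.adjWithinBlocks
      fun i => (hblock i).connected

section Revenue

variable {c : Sym2 V → ℝ} (hT : T.IsTree) (hc : ∀ e ∈ T.edgeSet, 0 ≤ c e)
include hT hc

/-- The union of optimal responses on the blocks is an optimal response to the union of the
strategies, and its revenue is the sum of the block revenues. -/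
theorem sum_followerRevenue_le_optRevenue (F : ∀ i, SimpleGraph (A i))
    (q : ∀ i, Sym2 (A i) → ℝ) (hF : ∀ i, IsBlueSet (T.induce (A i)) (F i))
    (hq : ∀ i, ∀ e ∈ (F i).edgeSet, 0 ≤ q i e) :
    ∑ i, followerRevenue (T.induce (A i)) (fun e => c (Sym2.map Subtype.val e)) (F i) (q i) ≤
      optRevenue T c := by
  have hA := hP.inter_subsingleton
  set p := blockPrice A q
  set Fg := ⨆ i, (F i).spanningCoe
  have hpq i : ∀ e ∈ (F i).edgeSet, p (Sym2.map Subtype.val e) = q i e :=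
    fun e he => blockPrice_map hA q ((F i).not_isDiag_of_mem_edgeSet he)
  choose M hMspan hMmin hMrev using fun i =>
    exists_optimal_response (hP.isTree_induce hT.isAcyclic i) (fun e => c (Sym2.map Subtype.val e)) (F i) (fun e => p (Sym2.map Subtype.val e))
  set Mg := ⨆ i, (M i).spanningCoe
  have hlocal {N : SimpleGraph V} (hN : N ≤ T ⊔ Fg) : AdjWithinBlocks A N :=
    (hP.adjWithinBlocks.sup (adjWithinBlocks_iSup_spanningCoe F)).mono hN
  have hMg : IsSpanningTreeOf (T ⊔ Fg) Mg := by
    refine ⟨iSup_spanningCoe_le_sup fun i => (hMspan i).1, ?_⟩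
    refine (hP.isTree_iff hT (adjWithinBlocks_iSup_spanningCoe M)).mpr fun i => ?_
    rw [induce_iSup_spanningCoe hA]
    exact (hMspan i).2
  have hMg_min : ∀ N, IsSpanningTreeOf (T ⊔ Fg) N → weight T c p Mg ≤ weight T c p N := by
    intro N hN
    rw [weight_eq_sum_induce hA (hlocal hMg.1), weight_eq_sum_induce hA (hlocal hN.1)]
    refine Finset.sum_le_sum fun i _ => ?_
    rw [induce_iSup_spanningCoe hA]
    exact hMmin i _ ⟨induce_le_of_le_sup_iSup hA hN.1 i, (hP.isTree_iff hT (hlocal hN.1)).mp hN.2 i⟩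
  have hp : ∀ e ∈ Fg.edgeSet, 0 ≤ p e := by
    intro e he
    obtain ⟨i, e', he', rfl⟩ := exists_map_val_eq_of_mem_edgeSet_iSup he
    exact hpq i e' he' ▸ hq i e' he'
  calc ∑ i, followerRevenue (T.induce (A i)) (fun e => c (Sym2.map Subtype.val e)) (F i) (q i)
      = ∑ i, blueRevenue (T.induce (A i)) (fun e => p (Sym2.map Subtype.val e)) (M i) := by
        refine Finset.sum_congr rfl fun i _ => ?_
        rw [hMrev, followerRevenue_congr fun e he => (hpq i e he).symm]
    _ = blueRevenue T p Mg := by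
        rw [blueRevenue_eq_sum_induce hA (hlocal hMg.1)]
        exact Finset.sum_congr rfl fun i _ => by rw [induce_iSup_spanningCoe hA]
    _ ≤ followerRevenue T c Fg p := blueRevenue_le_followerRevenue hT hc hMg hMg_min
    _ ≤ optRevenue T c :=
        followerRevenue_le_optRevenue hT hc (iSup_spanningCoe_le_compl hF) hp

theorem sum_optRevenue_le :
    ∑ i, optRevenue (T.induce (A i)) (fun e => c (Sym2.map Subtype.val e)) ≤ optRevenue T c := by
  refine Real.sum_csSup_le (fun i => ?_) fun x hx => ?_
  · exact ⟨_, ⊥, 0, bot_le, fun _ _ => le_rfl, rfl⟩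
  choose F q hF hq hx using hx
  simpa only [hx] using hP.sum_followerRevenue_le_optRevenue hT hc F q hF hq

end Revenue

end IsSubtreePartition

end Partition

end StackMST

theorem stackMST_partition_superadditive_general {V : Type*} [Finite V]
    (T : SimpleGraph V) (hT : T.IsTree) (c : Sym2 V → ℝ)
    (hc : ∀ e ∈ T.edgeSet, 0 ≤ c e)
    (ℓ : ℕ) (H : Fin ℓ → T.Subgraph)
    (hconn : ∀ i, (H i).Connected)
    (hE : ∀ e ∈ T.edgeSet, ∃ i, e ∈ (H i).edgeSet)
    (hdisj : ∀ i j, i ≠ j → Disjoint ((H i).edgeSet) ((H j).edgeSet)) :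
    ∑ i : Fin ℓ, optRevenue ((H i).coe) (fun e => c (Sym2.map Subtype.val e)) ≤
      optRevenue T c := by
  have hcoe i : (H i).coe = T.induce (H i).verts := (hconn i).coe_eq_induce hT.isAcyclic
  have hP : IsSubtreePartition T fun i => (H i).verts :=
    { connected_induce := fun i => hcoe i ▸ (hconn i).coe
      inter_subsingleton := fun i j hij =>
        (hconn i).verts_inter_subsingleton hT.isAcyclic (hconn j) (hdisj i j hij)
      adjWithinBlocks := fun u v huv => by
        obtain ⟨i, hi⟩ := hE s(u, v) huv
        exact ⟨i, (H i).mem_verts_of_mem_edge hi (Sym2.mem_mk_left u v),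
          (H i).mem_verts_of_mem_edge hi (Sym2.mem_mk_right u v)⟩ }
  simp only [hcoe]
  exact hP.sum_optRevenue_le hT hc

/-- If `T₁, …, T_ℓ` is a partition of the red tree `T` into `ℓ`
subtrees (each `Tᵢ` is a connected subgraph of `T`, the vertex sets cover `V`, the
edge sets are pairwise disjoint and cover `E(T)`), then the optimal revenue of the
game on `T` is at least the sum of the optimal revenues of the games on the
subtrees (with the restricted costs). -/
theorem stackMST_partition_superadditive {V : Type*} [Finite V]
    (T : SimpleGraph V) (hT : T.IsTree) (c : Sym2 V → ℝ)
    (hc : ∀ e ∈ T.edgeSet, 0 ≤ c e)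
    (ℓ : ℕ) (H : Fin ℓ → T.Subgraph)
    (hconn : ∀ i, (H i).Connected)
    (hV : ∀ v : V, ∃ i, v ∈ (H i).verts)
    (hE : ∀ e ∈ T.edgeSet, ∃ i, e ∈ (H i).edgeSet)
    (hdisj : ∀ i j, i ≠ j → Disjoint ((H i).edgeSet) ((H j).edgeSet)) :
    ∑ i : Fin ℓ, optRevenue ((H i).coe) (fun e => c (Sym2.map Subtype.val e)) ≤
      optRevenue T c :=
  stackMST_partition_superadditive_general T hT c hc ℓ H hconn hE hdisj
end

section
/- Let D = (V, B') be a finite graph. Then there exist edge subsets F1, F2 ⊆ B' and vertex subsets C1, C2 ⊆ V such that, for each i ∈ {1, 2}: every edge of F_i has exactly one endpoint in C_i, and every vertex not in C_i is incident to at most one edge of F_i (so that (V, F_i) is a forest of stars with centers in C_i); and moreover, every vertex of V incident to at least one edge of B' is, for i = 1 or for i = 2, a vertex not in C_i that is incident to exactly one edge of F_i (i.e., it is a leaf of a star of (V, F_i)). -/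
/-!
Colour the vertices with two colours so that every non-isolated vertex `v` has a neighbour
`f v` of the other colour: a proper 2-colouring of a spanning forest does this, since a vertex
that is not isolated in the graph is not isolated in the forest either. For each colour `i`, the
edges `v (f v)` with `v` of colour `i` form a forest of stars whose centres are the vertices of
the other colour: a vertex of colour `i` lies on such an edge only as its `v`. Every
non-isolated vertex is then a leaf for its own colour.
-/

open Set

namespace SimpleGraph

variable {V : Type*} {G : SimpleGraph V}

theorem mem_support_iff_exists_mem_edgeSet {v : V} :
    v ∈ G.support ↔ ∃ e ∈ G.edgeSet, v ∈ e := by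
  refine ⟨fun ⟨w, hvw⟩ ↦ ⟨s(v, w), hvw, Sym2.mem_mk_left v w⟩, ?_⟩
  rintro ⟨e, he, hve⟩
  obtain ⟨w, rfl⟩ := Sym2.mem_iff_exists.mp hve
  exact ⟨w, he⟩

theorem exists_two_coloring_partner (G : SimpleGraph V) :
    ∃ (c : V → Fin 2) (f : V → V),
      ∀ v ∈ G.support, G.Adj v (f v) ∧ c (f v) ≠ c v := by
  obtain ⟨F, hFG, hF, hreach⟩ := G.exists_isAcyclic_reachable_eq_le
  obtain ⟨c⟩ := hF.colorable_two
  have hpartner : ∀ v ∈ G.support, ∃ w, G.Adj v w ∧ c w ≠ c v := by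
    rintro v ⟨u, hvu⟩
    obtain ⟨w, hvw⟩ : v ∈ F.support :=
      mem_support_of_reachable hvu.ne (hreach ▸ hvu.reachable)
    exact ⟨w, hFG hvw, (c.valid hvw).symm⟩
  choose! f hf using hpartner
  exact ⟨c, f, hf⟩

end SimpleGraph

section PartnerEdges

variable {V : Type*}

def partnerEdges (f : V → V) (L : Set V) : Set (Sym2 V) :=
  (fun v ↦ s(v, f v)) '' L

variable {f : V → V} {L C : Set V}

theorem partnerEdges_subset_edgeSet {G : SimpleGraph V} (hf : ∀ v ∈ L, G.Adj v (f v)) :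
    partnerEdges f L ⊆ G.edgeSet := by
  rintro _ ⟨v, hv, rfl⟩
  exact hf v hv

theorem exists_eq_mk_of_mem_partnerEdges (hL : ∀ v ∈ L, v ∉ C) (hf : MapsTo f L C)
    {e : Sym2 V} (he : e ∈ partnerEdges f L) : ∃ u v, e = s(u, v) ∧ u ∈ C ∧ v ∉ C := by
  obtain ⟨v, hv, rfl⟩ := he
  exact ⟨f v, v, Sym2.eq_swap, hf hv, hL v hv⟩

theorem eq_mk_of_mem_partnerEdges (hf : MapsTo f L C) {w : V} (hw : w ∉ C) {e : Sym2 V}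
    (he : e ∈ partnerEdges f L) (hwe : w ∈ e) : e = s(w, f w) := by
  obtain ⟨v, hv, rfl⟩ := he
  rcases Sym2.mem_iff.mp hwe with rfl | rfl
  · rfl
  · exact absurd (hf hv) hw

theorem partnerEdges_eq_of_mem_of_mem (hf : MapsTo f L C) {w : V} (hw : w ∉ C)
    {e₁ e₂ : Sym2 V} (he₁ : e₁ ∈ partnerEdges f L) (he₂ : e₂ ∈ partnerEdges f L)
    (hwe₁ : w ∈ e₁) (hwe₂ : w ∈ e₂) : e₁ = e₂ :=
  (eq_mk_of_mem_partnerEdges hf hw he₁ hwe₁).trans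
    (eq_mk_of_mem_partnerEdges hf hw he₂ hwe₂).symm

theorem existsUnique_mem_partnerEdges (hf : MapsTo f L C) {w : V} (hw : w ∉ C) (hwL : w ∈ L) :
    ∃! e, e ∈ partnerEdges f L ∧ w ∈ e :=
  ⟨s(w, f w), ⟨mem_image_of_mem _ hwL, Sym2.mem_mk_left w (f w)⟩,
    fun _ ⟨he, hwe⟩ ↦ eq_mk_of_mem_partnerEdges hf hw he hwe⟩

end PartnerEdges

theorem forest_of_stars_decomposition_general {V : Type*}
    (B' : Set (Sym2 V)) (hB' : ∀ e ∈ B', ¬ e.IsDiag) :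
    ∃ (F1 F2 : Set (Sym2 V)) (C1 C2 : Set V),
      F1 ⊆ B' ∧ F2 ⊆ B' ∧
      (∀ e ∈ F1, ∃ u v, e = s(u, v) ∧ u ∈ C1 ∧ v ∉ C1) ∧
      (∀ e ∈ F2, ∃ u v, e = s(u, v) ∧ u ∈ C2 ∧ v ∉ C2) ∧
      (∀ v ∉ C1, ∀ e₁ ∈ F1, ∀ e₂ ∈ F1, v ∈ e₁ → v ∈ e₂ → e₁ = e₂) ∧
      (∀ v ∉ C2, ∀ e₁ ∈ F2, ∀ e₂ ∈ F2, v ∈ e₁ → v ∈ e₂ → e₁ = e₂) ∧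
      (∀ v : V, (∃ e ∈ B', v ∈ e) →
        (v ∉ C1 ∧ ∃! e, e ∈ F1 ∧ v ∈ e) ∨ (v ∉ C2 ∧ ∃! e, e ∈ F2 ∧ v ∈ e)) := by
  let G := SimpleGraph.fromEdgeSet B'
  have hE : G.edgeSet = B' := by
    rw [SimpleGraph.edgeSet_fromEdgeSet, sdiff_eq_left, disjoint_iff_forall_ne]
    rintro e he _ hd rfl
    exact hB' e he hd
  obtain ⟨c, f, hf⟩ := G.exists_two_coloring_partner
  let L (i : Fin 2) : Set V := {v ∈ G.support | c v = i}
  let C (i : Fin 2) : Set V := {v | c v ≠ i}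
  have hLC (i : Fin 2) : ∀ v ∈ L i, v ∉ C i := fun _ hv ↦ not_not.mpr hv.2
  have hfLC (i : Fin 2) : MapsTo f (L i) (C i) := fun v hv ↦ hv.2 ▸ (hf v hv.1).2
  have hsub (i : Fin 2) : partnerEdges f (L i) ⊆ B' :=
    hE ▸ partnerEdges_subset_edgeSet fun v hv ↦ (hf v hv.1).1
  refine ⟨partnerEdges f (L 0), partnerEdges f (L 1), C 0, C 1, hsub 0, hsub 1,
    fun _ ↦ exists_eq_mk_of_mem_partnerEdges (hLC 0) (hfLC 0),
    fun _ ↦ exists_eq_mk_of_mem_partnerEdges (hLC 1) (hfLC 1),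
    fun _ hw _ he₁ _ he₂ ↦ partnerEdges_eq_of_mem_of_mem (hfLC 0) hw he₁ he₂,
    fun _ hw _ he₁ _ he₂ ↦ partnerEdges_eq_of_mem_of_mem (hfLC 1) hw he₁ he₂,
    fun v hv ↦ ?_⟩
  have hvL : v ∈ L (c v) :=
    ⟨SimpleGraph.mem_support_iff_exists_mem_edgeSet.mpr (hE ▸ hv), rfl⟩
  have hleaf : v ∉ C (c v) ∧ ∃! e, e ∈ partnerEdges f (L (c v)) ∧ v ∈ e :=
    ⟨hLC _ v hvL, existsUnique_mem_partnerEdges (hfLC (c v)) (hLC _ v hvL) hvL⟩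
  rcases (by omega : c v = 0 ∨ c v = 1) with h | h
  · exact .inl (h ▸ hleaf)
  · exact .inr (h ▸ hleaf)

/-- Let `D = (V, B')` be a finite (loopless) graph. There exist
edge subsets `F1, F2 ⊆ B'` and vertex subsets `C1, C2 ⊆ V` such that, for each
`i ∈ {1, 2}`: every edge of `Fᵢ` has exactly one endpoint in `Cᵢ`, every vertex not
in `Cᵢ` is incident to at most one edge of `Fᵢ` (so `(V, Fᵢ)` is a forest of stars
with centers in `Cᵢ`), and moreover every vertex incident to an edge of `B'` is,
for `i = 1` or for `i = 2`, a vertex not in `Cᵢ` incident to exactly one edge of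
`Fᵢ` (i.e., a leaf of a star of `(V, Fᵢ)`). -/
theorem forest_of_stars_decomposition {V : Type*} [Finite V]
    (B' : Set (Sym2 V)) (hB' : ∀ e ∈ B', ¬ e.IsDiag) :
    ∃ (F1 F2 : Set (Sym2 V)) (C1 C2 : Set V),
      F1 ⊆ B' ∧ F2 ⊆ B' ∧
      (∀ e ∈ F1, ∃ u v, e = s(u, v) ∧ u ∈ C1 ∧ v ∉ C1) ∧
      (∀ e ∈ F2, ∃ u v, e = s(u, v) ∧ u ∈ C2 ∧ v ∉ C2) ∧
      (∀ v ∉ C1, ∀ e₁ ∈ F1, ∀ e₂ ∈ F1, v ∈ e₁ → v ∈ e₂ → e₁ = e₂) ∧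
      (∀ v ∉ C2, ∀ e₁ ∈ F2, ∀ e₂ ∈ F2, v ∈ e₁ → v ∈ e₂ → e₁ = e₂) ∧
      (∀ v : V, (∃ e ∈ B', v ∈ e) →
        (v ∉ C1 ∧ ∃! e, e ∈ F1 ∧ v ∈ e) ∨ (v ∉ C2 ∧ ∃! e, e ∈ F2 ∧ v ∈ e)) :=
  forest_of_stars_decomposition_general B' hB'
end

section
/- Let T be the red tree of a StackMST(γ,Δ) game, rooted at v0 with height h. For i = 1, …, h let V_i be the set of vertices at depth i, let E_i be the set of red edges joining each v ∈ V_i to its parent, let c_i(v) denote the cost of the red edge from v ∈ V_i to its parent, and set c_i(v0) = 0. For a set F of blue edges, let G_i(F) be the graph on vertex set {v0} ∪ V_i in which two vertices are adjacent if and only if F contains an edge with one endpoint in the connected component of T − E_i of the first vertex and the other endpoint in the connected component of T − E_i of the second vertex (the component of v ∈ V_i being the subtree of T rooted at v, and the component of v0 consisting of all vertices of depth less than i). Then the revenue obtainable from F satisfies r(F) ≤ c(T) − Σ_{i=1}^{h} Σ_{H ∈ comp(G_i(F))} min_{v ∈ V(H)} c_i(v), where comp(G_i(F)) is the set of connected components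 of G_i(F). -/
namespace StackMST

variable {V : Type*}

open Classical in
/-- `c_i(v)`: for a vertex `v` at depth `i ≥ 1` of the tree `T` rooted at `v0`,
the cost of the red edge joining `v` to its parent (the unique neighbour `u` of
`v` at depth `i − 1`); it is `0` for every other vertex (in particular
`c_i(v0) = 0`). -/
noncomputable def levelCost (T : SimpleGraph V) (c : Sym2 V → ℝ) (v0 : V)
    (i : ℕ) (v : V) : ℝ :=
  if T.dist v0 v = i ∧ 1 ≤ i then
    sSup {x | ∃ u, T.Adj u v ∧ T.dist v0 u + 1 = i ∧ x = c s(u, v)}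
  else 0

/-- `mapsTo T v0 i x u` says that, after removing the edges between depth `i − 1`
and depth `i`, the vertex `u` lies in the connected component represented by `x`:
either `u` has depth less than `i` and `x = v0`, or `x` is the depth-`i` ancestor
of `u` (i.e. `x` has depth `i` and lies on the unique path from `v0` to `u`). -/
def mapsTo (T : SimpleGraph V) (v0 : V) (i : ℕ) (x u : V) : Prop :=
  (T.dist v0 u < i ∧ x = v0) ∨
  (T.dist v0 x = i ∧ T.dist v0 u = i + T.dist x u)

/-- The auxiliary graph `G_i(F)` on `{v0} ∪ V_i`: two (distinct) vertices are
adjacent iff `F` contains an edge whose endpoints lie in their respective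
components of `T − E_i`. All vertices outside `{v0} ∪ V_i` are isolated. -/
def levelGraph (T F : SimpleGraph V) (v0 : V) (i : ℕ) : SimpleGraph V :=
  SimpleGraph.fromRel (fun x y =>
    ∃ u w : V, F.Adj u w ∧ mapsTo T v0 i x u ∧ mapsTo T v0 i y w)

end StackMST

open StackMST


namespace StackMSTAux

open SimpleGraph

variable {V : Type*} [DecidableEq V] {T : SimpleGraph V}

lemma exists_geodesic (hc : T.Connected) (x y : V) :
    ∃ p : T.Walk x y, p.IsPath ∧ p.length = T.dist x y := by
  obtain ⟨w, hw⟩ := hc.exists_walk_length_eq_dist x y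
  exact ⟨w.bypass, w.bypass_isPath,
    le_antisymm (by simpa [hw] using w.length_bypass_le) (SimpleGraph.dist_le _)⟩

lemma path_length_eq (hT : T.IsTree) {x y : V} (p : T.Walk x y) (hp : p.IsPath) :
    p.length = T.dist x y := by
  obtain ⟨q, hq, hql⟩ := exists_geodesic hT.isConnected x y
  have h2 : (⟨p, hp⟩ : T.Path x y) = ⟨q, hq⟩ := hT.IsAcyclic.path_unique _ _
  rw [show p = q from congrArg Subtype.val h2, hql]

lemma dist_add_of_mem (hT : T.IsTree) {x y z : V} (p : T.Walk x y) (hp : p.IsPath)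
    (hz : z ∈ p.support) : T.dist x y = T.dist x z + T.dist z y := by
  have h1 := path_length_eq hT _ (hp.takeUntil hz)
  have h2 := path_length_eq hT _ (hp.dropUntil hz)
  have h3 := path_length_eq hT p hp
  have h4 := congrArg SimpleGraph.Walk.length (p.take_spec hz)
  rw [SimpleGraph.Walk.length_append] at h4
  omega

lemma concat_isPath (hT : T.IsTree) {x u w : V} (p : T.Walk x u) (hp : p.IsPath)
    (h : T.Adj u w) (hw : w ∉ p.support) : (p.concat h).IsPath := by
  rw [← SimpleGraph.Walk.isPath_reverse_iff, SimpleGraph.Walk.reverse_concat]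
  exact hp.reverse.cons (by simpa [SimpleGraph.Walk.support_reverse] using hw)

lemma adj_dist (hT : T.IsTree) (v0 : V) {u w : V} (h : T.Adj u w) :
    T.dist v0 w = T.dist v0 u + 1 ∨ T.dist v0 u = T.dist v0 w + 1 := by
  obtain ⟨p, hp, hpl⟩ := exists_geodesic hT.isConnected v0 u
  by_cases hw : w ∈ p.support
  · right
    have h1 := dist_add_of_mem hT p hp hw
    have hdw : T.dist w u = 1 := SimpleGraph.dist_eq_one_iff_adj.mpr h.symm
    omega
  · left
    have hpath := concat_isPath hT p hp h hw
    have h2 := path_length_eq hT _ hpath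
    rw [SimpleGraph.Walk.length_concat, hpl] at h2
    omega

lemma parent_unique (hT : T.IsTree) (v0 : V) {u p q : V}
    (hpu : T.Adj p u) (hqu : T.Adj q u)
    (hp : T.dist v0 p + 1 = T.dist v0 u) (hq : T.dist v0 q + 1 = T.dist v0 u) :
    p = q := by
  obtain ⟨P, hP, hPl⟩ := exists_geodesic hT.isConnected v0 p
  obtain ⟨Q, hQ, hQl⟩ := exists_geodesic hT.isConnected v0 q
  have hup : u ∉ P.support := by
    intro hmem
    have h1 := dist_add_of_mem hT P hP hmem
    have h2 : T.dist u p = 1 := SimpleGraph.dist_eq_one_iff_adj.mpr hpu.symm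
    omega
  have huq : u ∉ Q.support := by
    intro hmem
    have h1 := dist_add_of_mem hT Q hQ hmem
    have h2 : T.dist u q = 1 := SimpleGraph.dist_eq_one_iff_adj.mpr hqu.symm
    omega
  have hP' := concat_isPath hT P hP hpu hup
  have hQ' := concat_isPath hT Q hQ hqu huq
  have heq : P.concat hpu = Q.concat hqu := by
    have h2 : (⟨P.concat hpu, hP'⟩ : T.Path v0 u) = ⟨Q.concat hqu, hQ'⟩ :=
      hT.IsAcyclic.path_unique _ _
    exact congrArg Subtype.val h2
  have hpq : T.dist v0 p = T.dist v0 q := by omega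
  have e1 : (P.concat hpu).getVert (T.dist v0 p) = p := by
    rw [SimpleGraph.Walk.concat_eq_append, SimpleGraph.Walk.getVert_append]
    simp [hPl]
  have e2 : (Q.concat hqu).getVert (T.dist v0 q) = q := by
    rw [SimpleGraph.Walk.concat_eq_append, SimpleGraph.Walk.getVert_append]
    simp [hQl]
  rw [← e1, ← e2, heq, hpq]

lemma dist_getVert_le (hT : T.IsTree) {x y : V} (p : T.Walk x y) (k : ℕ) :
    T.dist x (p.getVert k) ≤ k := by
  induction p generalizing k with
  | nil => simp [SimpleGraph.Walk.getVert, SimpleGraph.dist_self]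
  | @cons a b y h q ih =>
    cases k with
    | zero => simp [SimpleGraph.Walk.getVert_zero, SimpleGraph.dist_self]
    | succ k =>
      rw [SimpleGraph.Walk.getVert_cons_succ]
      calc T.dist a (q.getVert k) ≤ T.dist a b + T.dist b (q.getVert k) :=
            hT.isConnected.dist_triangle
        _ ≤ 1 + k := add_le_add (le_of_eq (SimpleGraph.dist_eq_one_iff_adj.mpr h)) (ih k)
        _ = k + 1 := by omega

lemma dist_getVert_end_le (hT : T.IsTree) {x y : V} (p : T.Walk x y) {k : ℕ}
    (hk : k ≤ p.length) : T.dist (p.getVert k) y ≤ p.length - k := by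
  have h1 := dist_getVert_le hT p.reverse (p.length - k)
  rw [SimpleGraph.Walk.getVert_reverse,
    show p.length - (p.length - k) = k by omega] at h1
  rwa [SimpleGraph.dist_comm]

lemma geodesic_getVert (hT : T.IsTree) {x y : V} (p : T.Walk x y)
    (hl : p.length = T.dist x y) {k : ℕ} (hk : k ≤ p.length) :
    T.dist x (p.getVert k) = k ∧ T.dist x y = k + T.dist (p.getVert k) y := by
  have h1 := dist_getVert_le hT p k
  have h2 := dist_getVert_end_le hT p hk
  have h3 : T.dist x y ≤ T.dist x (p.getVert k) + T.dist (p.getVert k) y :=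
    hT.isConnected.dist_triangle
  omega

open SimpleGraph StackMST

variable {V : Type*} [DecidableEq V] {T : SimpleGraph V}

lemma exists_mapsTo (hT : T.IsTree) (v0 : V) (i : ℕ) (u : V) :
    ∃ x, mapsTo T v0 i x u := by
  rcases lt_or_ge (T.dist v0 u) i with hlt | hle
  · exact ⟨v0, Or.inl ⟨hlt, rfl⟩⟩
  · obtain ⟨p, hp, hpl⟩ := exists_geodesic hT.isConnected v0 u
    obtain ⟨h1, h2⟩ := geodesic_getVert hT p hpl (k := i) (by omega)
    exact ⟨p.getVert i, Or.inr ⟨h1, h2⟩⟩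

omit [DecidableEq V] in
lemma levelCost_nonneg {c : Sym2 V → ℝ}
    (hc : ∀ e ∈ T.edgeSet, 0 ≤ c e) (v0 : V) (i : ℕ) (v : V) :
    0 ≤ levelCost T c v0 i v := by
  unfold levelCost
  split
  · apply Real.sSup_nonneg
    rintro x ⟨u, hadj, -, rfl⟩
    exact hc _ (by rwa [SimpleGraph.mem_edgeSet])
  · exact le_refl 0

omit [DecidableEq V] in
lemma levelCost_eq_zero {c : Sym2 V → ℝ} {v0 : V} {i : ℕ} {v : V}
    (hd : ¬(T.dist v0 v = i ∧ 1 ≤ i)) : levelCost T c v0 i v = 0 := by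
  unfold levelCost
  rw [if_neg hd]

lemma levelCost_eq (hT : T.IsTree) {c : Sym2 V → ℝ} {v0 : V} {i : ℕ}
    {u w : V} (hdu : T.dist v0 u = i) (hi : 1 ≤ i) (hadj : T.Adj w u)
    (hw : T.dist v0 w + 1 = i) : levelCost T c v0 i u = c s(w, u) := by
  unfold levelCost
  rw [if_pos ⟨hdu, hi⟩]
  have hset : {x | ∃ p, T.Adj p u ∧ T.dist v0 p + 1 = i ∧ x = c s(p, u)} = {c s(w, u)} := by
    ext x
    simp only [Set.mem_setOf_eq, Set.mem_singleton_iff]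
    constructor
    · rintro ⟨p, hp, hpd, rfl⟩
      rw [parent_unique hT v0 hp hadj (by omega) (by omega)]
    · rintro rfl
      exact ⟨w, hadj, hw, rfl⟩
  rw [hset, csSup_singleton]

lemma key_edge {V : Type*} [Finite V] [DecidableEq V] {T F M : SimpleGraph V}
    (hT : T.IsTree) {c : Sym2 V → ℝ} (hc : ∀ e ∈ T.edgeSet, 0 ≤ c e)
    (v0 : V) {i : ℕ} (hi : 1 ≤ i) (hM : M ≤ T ⊔ F) (hMc : M.Connected)
    (C : (levelGraph T F v0 i).ConnectedComponent)
    (hpos : 0 < sInf (levelCost T c v0 i '' C.supp)) :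
    ∃ u w, u ∈ C.supp ∧ T.dist v0 u = i ∧ T.dist v0 w + 1 = i ∧ T.Adj w u ∧
      s(w, u) ∈ M.edgeSet ∧ sInf (levelCost T c v0 i '' C.supp) ≤ c s(w, u) := by
  set m := sInf (levelCost T c v0 i '' C.supp) with hm
  have hinf_le : ∀ v ∈ C.supp, m ≤ levelCost T c v0 i v := fun v hv =>
    csInf_le (Set.Finite.bddBelow (Set.toFinite _)) ⟨v, hv, rfl⟩
  have hdepth : ∀ v ∈ C.supp, T.dist v0 v = i := by
    intro v hv
    by_contra hne
    have h0 := levelCost_eq_zero (T := T) (c := c) (v0 := v0) (i := i) (v := v)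
      (fun hx => hne hx.1)
    have h1 := hinf_le v hv
    rw [h0] at h1
    linarith
  set S : Set V := {z | ∃ x ∈ C.supp, T.dist v0 z = i + T.dist x z} with hS
  obtain ⟨v, hv⟩ := C.exists_rep
  have hvC : v ∈ C.supp := by rwa [SimpleGraph.ConnectedComponent.mem_supp_iff]
  have hvS : v ∈ S := ⟨v, hvC, by simp [SimpleGraph.dist_self, hdepth v hvC]⟩
  have hv0S : v0 ∉ S := by
    rintro ⟨x, hx, hd⟩
    rw [SimpleGraph.dist_self] at hd
    omega
  obtain ⟨walk⟩ := hMc.preconnected v v0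
  obtain ⟨d, hd, hdf, hds⟩ := walk.exists_boundary_dart S hvS hv0S
  obtain ⟨x, hxC, hxd⟩ := hdf
  have hxi : T.dist v0 x = i := hdepth x hxC
  have hAdj : M.Adj d.fst d.snd := d.adj
  have hab : (T ⊔ F).Adj d.fst d.snd := hM hAdj
  rw [SimpleGraph.sup_adj] at hab
  rcases hab with hred | hblue
  · rcases adj_dist hT v0 hred with hcase | hcase
    · exfalso
      apply hds
      refine ⟨x, hxC, ?_⟩
      have t0 : T.dist d.fst d.snd = 1 := SimpleGraph.dist_eq_one_iff_adj.mpr hred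
      have t1 : T.dist x d.snd ≤ T.dist x d.fst + T.dist d.fst d.snd :=
        hT.isConnected.dist_triangle
      have t2 : T.dist v0 d.snd ≤ T.dist v0 x + T.dist x d.snd :=
        hT.isConnected.dist_triangle
      omega
    · by_cases ha : T.dist x d.fst = 0
      · have hxa : x = d.fst := hT.isConnected.dist_eq_zero_iff.mp ha
        subst hxa
        refine ⟨d.fst, d.snd, hxC, hxi, by omega, hred.symm, ?_, ?_⟩
        · rw [SimpleGraph.mem_edgeSet]
          exact hAdj.symm
        · have h1 := hinf_le d.fst hxC
          rwa [levelCost_eq hT hxi hi hred.symm (by omega)] at h1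
      · exfalso
        obtain ⟨Q, hQp, hQl⟩ := exists_geodesic hT.isConnected x d.fst
        obtain ⟨hz1, hz2⟩ := geodesic_getVert hT Q hQl
          (k := T.dist x d.fst - 1) (by omega)
        set z := Q.getVert (T.dist x d.fst - 1) with hzdef
        have hzu : T.Adj z d.fst := by
          have hadj2 := Q.adj_getVert_succ (i := T.dist x d.fst - 1) (by omega)
          rw [show T.dist x d.fst - 1 + 1 = Q.length by omega] at hadj2
          rwa [SimpleGraph.Walk.getVert_length] at hadj2
        have hdz : T.dist v0 z = i + (T.dist x d.fst - 1) := by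
          have t1 : T.dist v0 z ≤ T.dist v0 x + T.dist x z :=
            hT.isConnected.dist_triangle
          have t2 : T.dist v0 d.fst ≤ T.dist v0 z + T.dist z d.fst :=
            hT.isConnected.dist_triangle
          have t0 : T.dist z d.fst = 1 := SimpleGraph.dist_eq_one_iff_adj.mpr hzu
          omega
        have hwz : d.snd = z :=
          parent_unique hT v0 hred.symm hzu (by omega) (by omega)
        apply hds
        refine ⟨x, hxC, ?_⟩
        rw [hwz]
        omega
  · exfalso
    obtain ⟨y, hy⟩ := exists_mapsTo hT v0 i d.snd
    have hxy : x ≠ y := by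
      rintro rfl
      rcases hy with ⟨hlt, rfl⟩ | ⟨hyd, hwd⟩
      · rw [SimpleGraph.dist_self] at hxi
        omega
      · exact hds ⟨x, hxC, hwd⟩
    have hadjG : (levelGraph T F v0 i).Adj x y := by
      rw [levelGraph, SimpleGraph.fromRel_adj]
      exact ⟨hxy, Or.inl ⟨d.fst, d.snd, hblue, Or.inr ⟨hxi, hxd⟩, hy⟩⟩
    have hyC : y ∈ C.supp := by
      rw [SimpleGraph.ConnectedComponent.mem_supp_iff] at hxC ⊢
      rw [← hxC]
      exact SimpleGraph.ConnectedComponent.sound hadjG.symm.reachable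
    rcases hy with ⟨hlt, rfl⟩ | ⟨hyd, hwd⟩
    · have h1 := hdepth _ hyC
      rw [SimpleGraph.dist_self] at h1
      omega
    · exact hds ⟨y, hyC, hwd⟩

open Classical in
lemma level_bound {V : Type*} [Finite V] {T F M : SimpleGraph V}
    (hT : T.IsTree) {c : Sym2 V → ℝ} (hc : ∀ e ∈ T.edgeSet, 0 ≤ c e)
    (v0 : V) {i : ℕ} (hi : 1 ≤ i) (hM : M ≤ T ⊔ F) (hMc : M.Connected) :
    ∑ᶠ C : (levelGraph T F v0 i).ConnectedComponent,
        sInf (levelCost T c v0 i '' C.supp) ≤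
      ∑ e ∈ (Set.toFinite (M.edgeSet ∩ T.edgeSet)).toFinset.filter
        (fun e => ∃ u w : V, e = s(w, u) ∧ T.dist v0 w + 1 = i ∧ T.dist v0 u = i), c e := by
  classical
  haveI : Fintype (levelGraph T F v0 i).ConnectedComponent := Fintype.ofFinite _
  set G := levelGraph T F v0 i with hG
  set img := fun C : G.ConnectedComponent => levelCost T c v0 i '' C.supp with himg
  have hne : ∀ C : G.ConnectedComponent, (img C).Nonempty := by
    intro C
    obtain ⟨v, hv⟩ := C.exists_rep
    exact ⟨levelCost T c v0 i v, v, by rwa [SimpleGraph.ConnectedComponent.mem_supp_iff], rfl⟩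
  have h0 : ∀ C, 0 ≤ sInf (img C) := fun C =>
    le_csInf (hne C) (by rintro b ⟨v, hv, rfl⟩; exact levelCost_nonneg hc v0 i v)
  rw [finsum_eq_sum_of_fintype]
  set Pos := Finset.univ.filter (fun C : G.ConnectedComponent => 0 < sInf (img C)) with hPos
  have hsum : ∑ C, sInf (img C) = ∑ C ∈ Pos, sInf (img C) := by
    refine (Finset.sum_subset (Finset.subset_univ _) ?_).symm
    intro C _ hC
    rw [hPos] at hC
    simp only [Finset.mem_filter, Finset.mem_univ, true_and, not_lt] at hC
    exact le_antisymm hC (h0 C)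
  rw [hsum]
  have key : ∀ C ∈ Pos, ∃ u w : V, u ∈ C.supp ∧ T.dist v0 u = i ∧ T.dist v0 w + 1 = i ∧
      T.Adj w u ∧ s(w, u) ∈ M.edgeSet ∧ sInf (img C) ≤ c s(w, u) := by
    intro C hC
    rw [hPos] at hC
    simp only [Finset.mem_filter, Finset.mem_univ, true_and] at hC
    exact key_edge hT hc v0 hi hM hMc C hC
  haveI : Inhabited V := ⟨v0⟩
  choose! uf wf hmem hdu hdw hadj hedge hle using key
  calc ∑ C ∈ Pos, sInf (img C) ≤ ∑ C ∈ Pos, c s(wf C, uf C) :=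
        Finset.sum_le_sum (fun C hC => hle C hC)
    _ = ∑ e ∈ Pos.image (fun C => s(wf C, uf C)), c e := by
        rw [Finset.sum_image]
        intro C1 h1 C2 h2 hE
        rw [Sym2.eq_iff] at hE
        rcases hE with ⟨hw, hu⟩ | ⟨hw, hu⟩
        · have m1 := hmem C1 h1
          have m2 := hmem C2 h2
          rw [SimpleGraph.ConnectedComponent.mem_supp_iff] at m1 m2
          rw [← m1, ← m2, hu]
        · exfalso
          have a1 := hdw C1 h1
          have a2 := hdu C2 h2
          rw [hw] at a1
          omega
    _ ≤ _ := by
        apply Finset.sum_le_sum_of_subset_of_nonneg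
        · intro e he
          simp only [Finset.mem_image] at he
          obtain ⟨C, hC, rfl⟩ := he
          simp only [Finset.mem_filter, Set.Finite.mem_toFinset, Set.mem_inter_iff]
          exact ⟨⟨hedge C hC, (SimpleGraph.mem_edgeSet T).mpr (hadj C hC)⟩,
            uf C, wf C, rfl, hdw C hC, hdu C hC⟩
        · intro e he _
          simp only [Finset.mem_filter, Set.Finite.mem_toFinset, Set.mem_inter_iff] at he
          exact hc e he.1.2

open Classical in
lemma red_lower {V : Type*} [Finite V] {T F M : SimpleGraph V}
    (hT : T.IsTree) {c : Sym2 V → ℝ} (hc : ∀ e ∈ T.edgeSet, 0 ≤ c e)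
    (v0 : V) (h : ℕ) (hM : M ≤ T ⊔ F) (hMc : M.Connected) :
    ∑ i ∈ Finset.Icc 1 h, ∑ᶠ C : (levelGraph T F v0 i).ConnectedComponent,
        sInf (levelCost T c v0 i '' C.supp) ≤ esum c (M.edgeSet ∩ T.edgeSet) := by
  classical
  set Di := fun i : ℕ => (Set.toFinite (M.edgeSet ∩ T.edgeSet)).toFinset.filter
      (fun e => ∃ u w : V, e = s(w, u) ∧ T.dist v0 w + 1 = i ∧ T.dist v0 u = i) with hDi
  have step1 : ∑ i ∈ Finset.Icc 1 h, ∑ᶠ C : (levelGraph T F v0 i).ConnectedComponent,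
      sInf (levelCost T c v0 i '' C.supp) ≤ ∑ i ∈ Finset.Icc 1 h, ∑ e ∈ Di i, c e := by
    apply Finset.sum_le_sum
    intro i hmemi
    have hi : 1 ≤ i := (Finset.mem_Icc.mp hmemi).1
    exact level_bound hT hc v0 hi hM hMc
  have hdisj : (↑(Finset.Icc 1 h) : Set ℕ).PairwiseDisjoint Di := by
    intro i _ j _ hij
    rw [Function.onFun, Finset.disjoint_left]
    intro e hei hej
    simp only [hDi, Finset.mem_filter] at hei hej
    obtain ⟨-, u1, w1, he1, b1, b2⟩ := hei
    obtain ⟨-, u2, w2, he2, b3, b4⟩ := hej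
    rw [he1, Sym2.eq_iff] at he2
    rcases he2 with ⟨e1, e2⟩ | ⟨e1, e2⟩
    · rw [e1] at b1
      rw [e2] at b2
      exact hij (by omega)
    · rw [e1] at b1
      rw [e2] at b2
      omega
  have step2 : ∑ i ∈ Finset.Icc 1 h, ∑ e ∈ Di i, c e =
      ∑ e ∈ (Finset.Icc 1 h).biUnion Di, c e := (Finset.sum_biUnion hdisj).symm
  have step3 : ∑ e ∈ (Finset.Icc 1 h).biUnion Di, c e ≤
      ∑ e ∈ (Set.toFinite (M.edgeSet ∩ T.edgeSet)).toFinset, c e := by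
    apply Finset.sum_le_sum_of_subset_of_nonneg
    · intro e he
      rw [Finset.mem_biUnion] at he
      obtain ⟨i, -, hei⟩ := he
      exact (Finset.mem_filter.mp hei).1
    · intro e he _
      rw [Set.Finite.mem_toFinset] at he
      exact hc e he.2
  have hesum : esum c (M.edgeSet ∩ T.edgeSet) =
      ∑ e ∈ (Set.toFinite (M.edgeSet ∩ T.edgeSet)).toFinset, c e := by
    rw [esum, ← finsum_mem_coe_finset, Set.Finite.coe_toFinset]
  linarith

end StackMSTAux

/-- Let `T` be the red tree of a StackMST(γ,Δ) game, rooted at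
`v0` with height `h`. For any feasible set `F` of blue edges, the obtainable
revenue satisfies
`r(F) ≤ c(T) − Σ_{i=1}^{h} Σ_{H ∈ comp(G_i(F))} min_{v ∈ V(H)} c_i(v)`.
(Components consisting of vertices outside `{v0} ∪ V_i` contribute `0`, as does
any component containing `v0`, according to the convention `c_i(v0) = 0`.) -/
theorem stackMST_budget_upper_bound {V : Type*} [Finite V]
    (T : SimpleGraph V) (hT : T.IsTree)
    (c : Sym2 V → ℝ) (hc : ∀ e ∈ T.edgeSet, 0 ≤ c e)
    (γ : Sym2 V → ℝ) (hγ : ∀ e : Sym2 V, 0 ≤ γ e) (Δ : ℝ) (hΔ : 0 ≤ Δ)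
    (v0 : V) (h : ℕ) (hheight : ∀ v : V, T.dist v0 v ≤ h)
    (F : SimpleGraph V) (hF : IsBlueSet T F) (hfeas : esum γ F.edgeSet ≤ Δ) :
    revenueOf T c F ≤ redCost T c -
      ∑ i ∈ Finset.Icc 1 h,
        ∑ᶠ C : (levelGraph T F v0 i).ConnectedComponent,
          sInf (levelCost T c v0 i '' C.supp) := by
  classical
  have hTconn := hT.isConnected
  have total_le_T := StackMSTAux.red_lower (F := F) (M := T) hT hc v0 h le_sup_left hTconn
  rw [Set.inter_self] at total_le_T
  have hBnn : 0 ≤ redCost T c -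
      ∑ i ∈ Finset.Icc 1 h,
        ∑ᶠ C : (levelGraph T F v0 i).ConnectedComponent,
          sInf (levelCost T c v0 i '' C.supp) := by
    rw [redCost]
    linarith
  rw [revenueOf]
  apply Real.sSup_le _ hBnn
  rintro r ⟨p, hp, rfl⟩
  rw [followerRevenue]
  apply Real.sSup_le _ hBnn
  rintro x ⟨M, hMst, hMmin, rfl⟩
  have hMred := StackMSTAux.red_lower (F := F) (M := M) hT hc v0 h hMst.1
    hMst.2.isConnected
  have hwT : weight T c p M ≤ weight T c p T := hMmin T ⟨le_sup_left, hT⟩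
  have hTw : weight T c p T = redCost T c := by
    rw [weight, Set.inter_self, Set.diff_self, redCost]
    have : esum p (∅ : Set (Sym2 V)) = 0 := by
      rw [esum]
      exact finsum_mem_empty
    rw [this]
    ring
  have hbr : blueRevenue T p M = weight T c p M - esum c (M.edgeSet ∩ T.edgeSet) := by
    rw [weight, blueRevenue]
    ring
  rw [hbr]
  linarith
end
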